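/- arXiv:2602.14850 — 12 statements merged into one kernel-verified Lean document; each statement's English description precedes it below -/
import Mathlib

section
/- There exists an instance with two agents and identical resources in which no complete allocation satisfies EF1-init. Concretely: with 4 identical resources, agent j having initial utility b_j = 1 and per-resource utility 3, and agent i having initial utility b_i = 10 and per-resource utility 10, every complete allocation (X_i, X_j) of the 4 resources violates EF1-init for some pair of agents. -/
/-- Per-resource values (identical resources): agent 0 is agent `i` with
initial utility 10 and per-resource utility 10; agent 1 is agent `j` with
initial utility 1 and per-resource utility 3. -/
def b0 : Fin 2 → ℚ := ![10, 1]
def v0 : Fin 2 → ℚ := ![10, 3]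

/-- EF1-init for identical resources over `Fin 4`, additive utilities
`u_k(X) = v0 k * |X|`. -/
def EF1init0 (X : Fin 2 → Finset (Fin 4)) : Prop :=
  ∀ k l : Fin 2, X l = ∅ ∨
    ∃ r ∈ X l, b0 l + v0 k * (((X l).erase r).card : ℚ) ≤ b0 k + v0 k * ((X k).card : ℚ)

/-- There is an instance with two agents and four identical resources in which
no complete allocation satisfies EF1-init. -/
theorem stmt_0 :
    ∀ X : Fin 2 → Finset (Fin 4),
      (∀ k l : Fin 2, k ≠ l → Disjoint (X k) (X l)) →
      (X 0 ∪ X 1 = Finset.univ) →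
      ¬ EF1init0 X := by
  intro X hdisj hunion h
  have hd := hdisj 0 1 (by decide)
  have hcard : (X 0).card + (X 1).card = 4 := by
    rw [← Finset.card_union_of_disjoint hd, hunion]
    simp
  rcases h 1 0 with h0 | ⟨r, hr, hle⟩
  · rcases h 0 1 with h1 | ⟨s, hs, hle1⟩
    · rw [h0, h1] at hcard; simp at hcard
    · rw [h0] at hcard; simp at hcard
      rw [Finset.card_erase_of_mem hs, hcard, h0] at hle1
      simp [b0, v0] at hle1
      norm_num at hle1
  · have hr1 : 1 ≤ (X 0).card := Finset.one_le_card.2 ⟨r, hr⟩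
    rw [Finset.card_erase_of_mem hr] at hle
    rcases h 0 1 with h1 | ⟨s, hs, hle1⟩
    · rw [h1] at hcard; simp at hcard
      rw [hcard, h1] at hle
      simp [b0, v0] at hle
      norm_num at hle
    · have hs1 : 1 ≤ (X 1).card := Finset.one_le_card.2 ⟨s, hs⟩
      rw [Finset.card_erase_of_mem hs] at hle1
      simp only [b0, v0, Matrix.cons_val_zero, Matrix.cons_val_one, Matrix.head_cons] at hle hle1
      have hc : ((X 0).card : ℚ) + (X 1).card = 4 := by exact_mod_cast hcard
      have ha : (1 : ℚ) ≤ (X 0).card := by exact_mod_cast hr1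
      have hb : (1 : ℚ) ≤ (X 1).card := by exact_mod_cast hs1
      push_cast [hr1, hs1] at hle hle1
      linarith
end

section
/- Let all resources be identical (each agent i values every resource at v_i > 0), and let X be an allocation in which no agent among a given set envies another under EF-init. If i and j are agents in this set with b_i < b_j and v_i < v_j, then |X_j| = 0. -/
/-- Agent `a` envies agent `c` under EF-init (identical resources:
`u_a(X) = v a * |X|`). -/
def enviesEFinit {A R : Type*} [DecidableEq R] (b v : A → ℚ) (X : A → Finset R)
    (a c : A) : Prop :=
  X c ≠ ∅ ∧ b a + v a * ((X a).card : ℚ) < b c + v a * ((X c).card : ℚ)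

/-- With identical resources, if no agent in a set `S` envies another member of `S`
under EF-init, and `i, j ∈ S` satisfy `b i < b j` and `v i < v j`, then `|X j| = 0`. -/
theorem stmt_1 {A R : Type*} [DecidableEq R] (b v : A → ℚ) (X : A → Finset R)
    (S : Set A) (i j : A) (hi : i ∈ S) (hj : j ∈ S)
    (hbnn : ∀ k, 0 ≤ b k) (hv : ∀ k, 0 < v k)
    (hnoenvy : ∀ a ∈ S, ∀ c ∈ S, ¬ enviesEFinit b v X a c)
    (hb : b i < b j) (hvij : v i < v j) :
    (X j).card = 0 := by
  by_contra hne
  have hXj : X j ≠ ∅ := by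
    intro h; exact hne (by simp [h])
  have hij := hnoenvy i hi j hj
  have hji := hnoenvy j hj i hi
  simp only [enviesEFinit, not_and, not_lt] at hij hji
  have h1 : b j + v i * ((X j).card : ℚ) ≤ b i + v i * ((X i).card : ℚ) := hij hXj
  have hcj : (1 : ℚ) ≤ ((X j).card : ℚ) := by
    have : 1 ≤ (X j).card := Nat.one_le_iff_ne_zero.mpr hne
    exact_mod_cast this
  have hXi : X i ≠ ∅ := by
    intro h
    have : (X i).card = 0 := by simp [h]
    rw [this] at h1; push_cast at h1
    nlinarith [hv i]
  have h2 : b i + v j * ((X i).card : ℚ) ≤ b j + v j * ((X j).card : ℚ) := hji hXi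
  have hgt : ((X j).card : ℚ) < ((X i).card : ℚ) := by
    nlinarith [hv i]
  nlinarith [hv i, hv j]
end

section
/- With identical resources, if in an allocation X agent i does not envy agent i* under EF-init and agent i* does not envy agent j under EF-init, where b_i < b_{i*} < b_j, v_j ≤ v_{i*} ≤ v_i (per-resource values weakly decreasing in initial utility among these three agents), then agent i does not envy agent j under EF-init. -/
/-- Transitivity of non-envy (downward direction): if `i` does not envy `i*` and
`i*` does not envy `j` under EF-init, with `b i < b i* < b j` and
`v j ≤ v i* ≤ v i`, then `i` does not envy `j` under EF-init. -/
theorem stmt_2 {A R : Type*} [DecidableEq R] (b v : A → ℚ) (X : A → Finset R)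
    (i istar j : A)
    (hbnn : ∀ k, 0 ≤ b k) (hv : ∀ k, 0 < v k)
    (hb1 : b i < b istar) (hb2 : b istar < b j)
    (hv1 : v j ≤ v istar) (hv2 : v istar ≤ v i)
    (h1 : ¬ enviesEFinit b v X i istar)
    (h2 : ¬ enviesEFinit b v X istar j) :
    ¬ enviesEFinit b v X i j := by
  rintro ⟨hj, hlt⟩
  simp only [enviesEFinit, not_and, not_lt] at h1 h2
  have h2' := h2 hj
  set ci := ((X i).card : ℚ)
  set cs := ((X istar).card : ℚ)
  set cj := ((X j).card : ℚ)
  have hcj1 : (1 : ℚ) ≤ cj := by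
    have : 0 < (X j).card := Finset.card_pos.mpr (Finset.nonempty_iff_ne_empty.mpr hj)
    simp only [cj]; exact_mod_cast this
  by_cases hs : X istar = ∅
  · have : cs = 0 := by simp [cs, hs]
    rw [this] at h2'
    nlinarith [hv istar]
  · have h1' := h1 hs
    -- from h2': v istar * (cs - cj) ≥ b j - b istar > 0, so cs > cj
    have hcs : cj ≤ cs := by nlinarith [hv istar]
    nlinarith [mul_le_mul_of_nonneg_left hcs (sub_nonneg.mpr hv2)]
end

section
/- With identical resources, if in an allocation X agent j does not envy agent i* under EF-init and agent i* does not envy agent i under EF-init, where b_i < b_{i*} < b_j and v_j ≤ v_{i*} ≤ v_i, then agent j does not envy agent i under EF-init. -/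
/-- Transitivity of non-envy (upward direction): if `j` does not envy `i*` and
`i*` does not envy `i` under EF-init, with `b i < b i* < b j` and
`v j ≤ v i* ≤ v i`, then `j` does not envy `i` under EF-init. -/
theorem stmt_3 {A R : Type*} [DecidableEq R] (b v : A → ℚ) (X : A → Finset R)
    (i istar j : A)
    (hbnn : ∀ k, 0 ≤ b k) (hv : ∀ k, 0 < v k)
    (hb1 : b i < b istar) (hb2 : b istar < b j)
    (hv1 : v j ≤ v istar) (hv2 : v istar ≤ v i)
    (h1 : ¬ enviesEFinit b v X j istar)
    (h2 : ¬ enviesEFinit b v X istar i) :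
    ¬ enviesEFinit b v X j i := by
  rintro ⟨hne, hlt⟩
  simp only [enviesEFinit, not_and, not_lt] at h1 h2
  have h2' := h2 hne
  have hcard : (0 : ℚ) ≤ ((X i).card : ℚ) := by positivity
  have hcardj : (0 : ℚ) ≤ ((X j).card : ℚ) := by positivity
  by_cases hst : X istar = ∅
  · rw [hst] at h2'
    simp at h2'
    nlinarith [hv j, hv istar]
  · have h1' := h1 hst
    nlinarith [hv j, hv istar]
end

section
/- If utilities are diminishing (b_i < b_j implies u_i({r}) ≥ u_j({r}) for all resources r), then every allocation that is min-EF1-init is also EF1-init. -/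
variable {A R : Type*} [Fintype A] [DecidableEq R]

/-- Additive utility of agent `i` (per-resource values `u i`) for a bundle `X`. -/
def util (u : A → R → ℚ) (i : A) (X : Finset R) : ℚ := ∑ r ∈ X, u i r

/-- EF1-init: for every pair `i j`, either `X j = ∅` or there is `r ∈ X j` with
`b i + u_i(X i) ≥ b j + u_i(X j \ {r})`. -/
def EF1init (b : A → ℚ) (u : A → R → ℚ) (X : A → Finset R) : Prop :=
  ∀ i j : A, X j = ∅ ∨
    ∃ r ∈ X j, b j + util u i ((X j).erase r) ≤ b i + util u i (X i)

/-- `min { u j' r : j' ∈ A, b j' < b i }` (0 if there is no such agent). -/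
def minBelow (b : A → ℚ) (u : A → R → ℚ) (i : A) (r : R) : ℚ :=
  if h : (Finset.univ.filter (fun j' => b j' < b i)).Nonempty then
    (Finset.univ.filter (fun j' => b j' < b i)).inf' h (fun j' => u j' r)
  else 0

/-- min-EF1-init. -/
def minEF1init (b : A → ℚ) (u : A → R → ℚ) (X : A → Finset R) : Prop :=
  ∀ i j : A, X j = ∅ ∨
    ((b i ≤ b j → ∃ r ∈ X j, b j + util u i ((X j).erase r) ≤ b i + util u i (X i)) ∧
     (b j < b i → ∃ r ∈ X j, ∃ Xs ⊆ X j,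
        (∑ r' ∈ Xs, minBelow b u i r') < b i - b j ∧
        util u i (X j \ insert r Xs) ≤ util u i (X i)))

/-- If utilities are diminishing, every min-EF1-init allocation is EF1-init. -/
theorem stmt_4 (b : A → ℚ) (u : A → R → ℚ) (X : A → Finset R)
    (hdim : ∀ i j : A, ∀ r : R, b i < b j → u j r ≤ u i r)
    (hmin : minEF1init b u X) :
    EF1init b u X := by
  intro i j
  rcases hmin i j with h | ⟨h1, h2⟩
  · exact Or.inl h
  right
  rcases le_or_gt (b i) (b j) with hb | hb
  · exact h1 hb
  obtain ⟨r, hr, Xs, hXs, hsum, hutil⟩ := h2 hb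
  -- pointwise bound: u i r' ≤ minBelow b u i r'
  have hne : (Finset.univ.filter (fun j' => b j' < b i)).Nonempty :=
    ⟨j, by simp [hb]⟩
  have hub : ∀ r', u i r' ≤ minBelow b u i r' := by
    intro r'
    rw [minBelow, dif_pos hne]
    apply Finset.le_inf'
    intro j' hj'
    simp only [Finset.mem_filter, Finset.mem_univ, true_and] at hj'
    exact hdim j' i r' hj'
  have hsumXs : ∑ r' ∈ Xs, u i r' ≤ ∑ r' ∈ Xs, minBelow b u i r' :=
    Finset.sum_le_sum fun r' _ => hub r'
  have hsub : insert r Xs ⊆ X j := Finset.insert_subset hr hXs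
  have hsplit : util u i (X j \ insert r Xs) + util u i (insert r Xs) = util u i (X j) := by
    simpa [util] using Finset.sum_sdiff (f := u i) hsub
  by_contra hcon
  push_neg at hcon
  by_cases hrXs : r ∈ Xs
  · -- insert r Xs = Xs
    have hins : insert r Xs = Xs := Finset.insert_eq_self.mpr hrXs
    rw [hins] at hsplit hutil
    -- every item in X j has negative utility for i
    have hW : util u i (X j) < util u i (X i) + (b i - b j) := by
      have : util u i Xs ≤ ∑ r' ∈ Xs, minBelow b u i r' := by simpa [util] using hsumXs
      linarith [hsplit, hutil, hsum, this]
    have hneg : ∀ r0 ∈ X j, u i r0 < 0 := by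
      intro r0 hr0
      have herase : util u i ((X j).erase r0) + u i r0 = util u i (X j) := by
        simpa [util] using Finset.sum_erase_add (X j) (u i) hr0
      have := hcon r0 hr0
      linarith
    -- hence the erased mins-bundle sum is nonpositive
    have hXsErase : util u i (Xs.erase r) ≤ 0 := by
      apply Finset.sum_nonpos
      intro r0 hr0
      exact le_of_lt (hneg r0 (hXs (Finset.mem_of_mem_erase hr0)))
    have herase : util u i ((X j).erase r) + u i r = util u i (X j) := by
      simpa [util] using Finset.sum_erase_add (X j) (u i) hr
    have hXsErase' : util u i (Xs.erase r) + u i r = util u i Xs := by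
      simpa [util] using Finset.sum_erase_add Xs (u i) hrXs
    have := hcon r hr
    -- util erase r (X j) = util T + util (Xs.erase r) ≤ util (X i)
    linarith [hutil]
  · -- r ∉ Xs
    have hins : util u i (insert r Xs) = u i r + util u i Xs := by
      simpa [util] using Finset.sum_insert hrXs
    have herase : util u i ((X j).erase r) + u i r = util u i (X j) := by
      simpa [util] using Finset.sum_erase_add (X j) (u i) hr
    have hXsle : util u i Xs ≤ ∑ r' ∈ Xs, minBelow b u i r' := by
      simpa [util] using hsumXs
    have := hcon r hr
    linarith [hutil]
end

section
/- There exists an instance with three agents and identical resources in which no complete allocation satisfies the fairness notion obtained from EF1-init by replacing the condition for b_i > b_j with: there exist X* ⊆ X_j with u_j(X*) < b_i − b_j and r ∈ X_j such that u_i(X_i) ≥ u_i(X_j \ (X* ∪ {r})). Concretely: with 10 identical resources, agents 1, 2, 3 with b_1 = b_2 = 0, b_3 = 20, u_1({r}) = u_3({r}) = 20, and u_2({r}) = 5 for all resources r, no complete allocation satisfies this notion. -/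
/-- Initial utilities of agents 1, 2, 3 (indices 0, 1, 2). -/
def b5 : Fin 3 → ℚ := ![0, 0, 20]
/-- Per-resource utilities (identical resources). -/
def v5 : Fin 3 → ℚ := ![20, 5, 20]

/-- The (unsatisfiable) relaxation of EF1-init from Example 3.6: for `b i > b j`
one may remove a set `X* ⊆ X j` with `u_j(X*) < b i - b j` plus one resource. -/
def relaxedEF1init5 (X : Fin 3 → Finset (Fin 10)) : Prop :=
  ∀ i j : Fin 3, X j = ∅ ∨
    ((b5 i ≤ b5 j → ∃ r ∈ X j,
        b5 j + v5 i * (((X j).erase r).card : ℚ) ≤ b5 i + v5 i * ((X i).card : ℚ)) ∧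
     (b5 j < b5 i → ∃ Xs ⊆ X j, v5 j * (Xs.card : ℚ) < b5 i - b5 j ∧
        ∃ r ∈ X j, v5 i * (((X j \ insert r Xs).card : ℚ)) ≤ v5 i * ((X i).card : ℚ)))

/-!
Only the bundle sizes `a, b, c` of agents 1, 2, 3 matter, and each ordered pair of agents gives a
linear constraint on them. If `c > 0`, agents 1 and 2 must not envy agent 3 up to one resource
once its head start `b₃ = 20` is counted, so `c ≤ a` and `c + 3 ≤ b`; against agent 1, agent 3
may only discard `X* = ∅`, so `a ≤ c + 1`; and agent 1 bounds agent 2 by `b ≤ a + 1`. Together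
`b ≤ c + 2 < b`. If `c = 0`, the same constraints give `a ≤ 1` and `b ≤ 4`, so not all ten
resources are allocated.
-/

theorem Finset.card_le_card_sdiff_insert_add_card {α : Type*} [DecidableEq α]
    (t s : Finset α) (r : α) : t.card ≤ (t \ insert r s).card + s.card + 1 :=
  calc t.card ≤ (t \ insert r s).card + (insert r s).card := Finset.card_le_card_sdiff_add_card
    _ ≤ (t \ insert r s).card + s.card + 1 := by
      rw [add_assoc]; exact Nat.add_le_add_left (Finset.card_insert_le r s) _

theorem card_add_card_add_card_eq_of_partition {α : Type*} [Fintype α] [DecidableEq α]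
    (X : Fin 3 → Finset α) (hdis : ∀ k l : Fin 3, k ≠ l → Disjoint (X k) (X l))
    (hcover : X 0 ∪ X 1 ∪ X 2 = Finset.univ) :
    (X 0).card + (X 1).card + (X 2).card = Fintype.card α := by
  rw [← Finset.card_univ, ← hcover,
    Finset.card_union_of_disjoint (Finset.disjoint_union_left.mpr
      ⟨hdis 0 2 (by decide), hdis 1 2 (by decide)⟩),
    Finset.card_union_of_disjoint (hdis 0 1 (by decide))]

theorem v5_pos (i : Fin 3) : 0 < v5 i := by
  fin_cases i <;> norm_num [v5]

namespace relaxedEF1init5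

variable {X : Fin 3 → Finset (Fin 10)}

theorem envy_bound_of_initial_le (h : relaxedEF1init5 X) {i j : Fin 3} (hij : b5 i ≤ b5 j)
    (hj : 0 < (X j).card) :
    b5 j + v5 i * ((X j).card - 1 : ℚ) ≤ b5 i + v5 i * (X i).card := by
  rcases h i j with hempty | ⟨hle, -⟩
  · simp [hempty] at hj
  obtain ⟨r, hr, hbound⟩ := hle hij
  rwa [Finset.cast_card_erase_of_mem hr] at hbound

theorem exists_card_le_of_initial_lt (h : relaxedEF1init5 X) {i j : Fin 3} (hij : b5 j < b5 i)
    (hj : 0 < (X j).card) :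
    ∃ s : ℕ, v5 j * s < b5 i - b5 j ∧ (X j).card ≤ (X i).card + s + 1 := by
  rcases h i j with hempty | ⟨-, hlt⟩
  · simp [hempty] at hj
  obtain ⟨Xs, -, hXs, r, -, hbound⟩ := hlt hij
  have hrest : (X j \ insert r Xs).card ≤ (X i).card := by
    exact_mod_cast le_of_mul_le_mul_left hbound (v5_pos i)
  exact ⟨Xs.card, hXs, (Finset.card_le_card_sdiff_insert_add_card _ Xs r).trans (by omega)⟩

end relaxedEF1init5

/-- With 10 identical resources, `b = (0,0,20)`, per-resource values `(20,5,20)`,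
no complete allocation satisfies the relaxed notion. -/
theorem stmt_5 :
    ∀ X : Fin 3 → Finset (Fin 10),
      (∀ k l : Fin 3, k ≠ l → Disjoint (X k) (X l)) →
      (X 0 ∪ X 1 ∪ X 2 = Finset.univ) →
      ¬ relaxedEF1init5 X := by
  intro X hdis hcover h
  have hsum := card_add_card_add_card_eq_of_partition X hdis hcover
  have h02 : 0 < (X 2).card → (X 2).card ≤ (X 0).card := fun hc => by
    have := h.envy_bound_of_initial_le (i := 0) (by norm_num [b5, Matrix.cons_val_two]) hc
    norm_num [b5, v5, Matrix.cons_val_two] at this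
    exact_mod_cast (by linarith : ((X 2).card : ℚ) ≤ (X 0).card)
  have h12 : 0 < (X 2).card → (X 2).card + 3 ≤ (X 1).card := fun hc => by
    have := h.envy_bound_of_initial_le (i := 1) (by norm_num [b5, Matrix.cons_val_two]) hc
    norm_num [b5, v5, Matrix.cons_val_two] at this
    exact_mod_cast (by linarith : ((X 2).card : ℚ) + 3 ≤ (X 1).card)
  have h01 : 0 < (X 1).card → (X 1).card ≤ (X 0).card + 1 := fun hb => by
    have := h.envy_bound_of_initial_le (i := 0) (by norm_num [b5, Matrix.cons_val_two]) hb
    norm_num [b5, v5, Matrix.cons_val_two] at this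
    exact_mod_cast (by linarith : ((X 1).card : ℚ) ≤ (X 0).card + 1)
  have h20 : 0 < (X 0).card → (X 0).card ≤ (X 2).card + 1 := fun ha => by
    obtain ⟨s, hs, hcard⟩ := h.exists_card_le_of_initial_lt (i := 2) (by norm_num [b5, Matrix.cons_val_two]) ha
    have : s = 0 := by norm_num [b5, v5, Matrix.cons_val_two] at hs; exact hs
    omega
  have h21 : 0 < (X 1).card → (X 1).card ≤ (X 2).card + 4 := fun hb => by
    obtain ⟨s, hs, hcard⟩ := h.exists_card_le_of_initial_lt (i := 2) (by norm_num [b5, Matrix.cons_val_two]) hb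
    have : s < 4 := by norm_num [b5, v5, Matrix.cons_val_two] at hs; exact_mod_cast (by linarith : (s : ℚ) < 4)
    omega
  simp only [Fintype.card_fin] at hsum
  omega
end

section
/- In the instance with 4 identical resources, agent j with b_j = 1 and per-resource utility 3, agent i with b_i = 10 and per-resource utility 10, a complete allocation is min-EF1-init if and only if |X_i| = 1 and |X_j| = 3. -/
variable {A R : Type*} [Fintype A] [DecidableEq R]

/-- Agent 0 is agent `i` (initial utility 10, per-resource utility 10),
agent 1 is agent `j` (initial utility 1, per-resource utility 3). -/
def b6 : Fin 2 → ℚ := ![10, 1]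
def u6 : Fin 2 → Fin 4 → ℚ := fun k _ => ![10, 3] k

lemma util0 (S : Finset (Fin 4)) : util u6 0 S = 10 * S.card := by
  simp [util, u6, Finset.sum_const, mul_comm]

lemma util1 (S : Finset (Fin 4)) : util u6 1 S = 3 * S.card := by
  simp [util, u6, Finset.sum_const, mul_comm]

lemma minB0 (r : Fin 4) : minBelow b6 u6 0 r = 3 := by fin_cases r <;> decide

/-- In the instance of Observation 3.1, a complete allocation is min-EF1-init
iff `|X i| = 1` and `|X j| = 3`. -/
theorem stmt_6 (X : Fin 2 → Finset (Fin 4))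
    (hdisj : ∀ k l : Fin 2, k ≠ l → Disjoint (X k) (X l))
    (hcomp : X 0 ∪ X 1 = Finset.univ) :
    minEF1init b6 u6 X ↔ ((X 0).card = 1 ∧ (X 1).card = 3) := by
  have hcard : (X 0).card + (X 1).card = 4 := by
    rw [← Finset.card_union_of_disjoint (hdisj 0 1 (by decide)), hcomp]
    simp
  constructor
  · intro h
    -- from h 0 1 : |X 1| ≤ |X 0| + 3
    have h01 : (X 1).card ≤ (X 0).card + 3 := by
      rcases h 0 1 with he | ⟨_, h2⟩
      · have : (X 1).card = 0 := by rw [he]; simp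
        omega
      · obtain ⟨r, hr, Xs, hXs, hsum, hle⟩ := h2 (by norm_num [b6])
        rw [util0, util0] at hle
        have hc1 : (X 1).card - ((Xs.card) + 1) ≤ ((X 1) \ insert r Xs).card := by
          calc (X 1).card - (Xs.card + 1) ≤ (X 1).card - (insert r Xs).card := by
                have := Finset.card_insert_le r Xs; omega
            _ ≤ ((X 1) \ insert r Xs).card := Finset.le_card_sdiff _ _
        have hs : (∑ r' ∈ Xs, minBelow b6 u6 0 r') = 3 * Xs.card := by
          rw [Finset.sum_congr rfl (fun r' _ => minB0 r')]
          simp [Finset.sum_const, mul_comm]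
        rw [hs] at hsum
        have hb : (b6 0 : ℚ) - b6 1 = 9 := by norm_num [b6]
        rw [hb] at hsum
        have hXsc : Xs.card ≤ 2 := by
          by_contra hc
          push_neg at hc
          have : (3 : ℚ) * Xs.card ≥ 9 := by
            have : (3 : ℚ) ≤ (Xs.card : ℚ) := by exact_mod_cast hc
            linarith
          linarith
        have hle' : ((X 1) \ insert r Xs).card ≤ (X 0).card := by
          by_contra hc
          push_neg at hc
          have : (10 : ℚ) * ((X 0).card : ℚ) < 10 * (((X 1) \ insert r Xs).card : ℚ) := by
            have : ((X 0).card : ℚ) < (((X 1) \ insert r Xs).card : ℚ) := by exact_mod_cast hc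
            linarith
          linarith
        omega
    -- from h 1 0 : either X 0 = ∅ or |X 0| + 2 ≤ |X 1|
    rcases h 1 0 with he | ⟨h1, _⟩
    · have : (X 0).card = 0 := by rw [he]; simp
      omega
    by_cases h0e : X 0 = ∅
    · have : (X 0).card = 0 := by rw [h0e]; simp
      omega
    obtain ⟨r, hr, hle⟩ := h1 (by norm_num [b6])
    rw [util1, util1, Finset.card_erase_of_mem hr] at hle
    have hb0 : (b6 0 : ℚ) = 10 := by norm_num [b6]
    have hb1 : (b6 1 : ℚ) = 1 := by norm_num [b6]
    rw [hb0, hb1] at hle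
    have h0pos : 1 ≤ (X 0).card := Finset.card_pos.mpr (Finset.nonempty_iff_ne_empty.mpr h0e)
    have h10 : (X 0).card + 2 ≤ (X 1).card := by
      by_contra hc
      push_neg at hc
      have hq : ((X 1).card : ℚ) < ((X 0).card : ℚ) + 2 := by exact_mod_cast hc
      have hq2 : (((X 0).card - 1 : ℕ) : ℚ) = ((X 0).card : ℚ) - 1 := by
        push_cast [h0pos]; ring
      rw [hq2] at hle
      linarith
    omega
  · rintro ⟨h0, h1⟩
    obtain ⟨r0, hr0⟩ := Finset.card_eq_one.mp h0
    have h1ne : (X 1).Nonempty := Finset.card_pos.mp (by omega)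
    obtain ⟨r1, hr1⟩ := h1ne
    intro i j
    have h2 : ∀ k : Fin 2, k = 0 ∨ k = 1 := by decide
    rcases h2 i with rfl | rfl <;> rcases h2 j with rfl | rfl
    · -- (0,0)
      right
      constructor
      · intro _
        refine ⟨r0, by simp [hr0], ?_⟩
        rw [util0, util0, hr0]
        simp
      · intro hlt; norm_num [b6] at hlt
    · -- (0,1)
      right
      constructor
      · intro hle; norm_num [b6] at hle
      · intro _
        refine ⟨r1, hr1, (X 1).erase r1, Finset.erase_subset _ _, ?_, ?_⟩
        · rw [Finset.sum_congr rfl (fun r' _ => minB0 r')]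
          simp [Finset.sum_const, Finset.card_erase_of_mem hr1, h1, mul_comm]
          norm_num [b6]
        · rw [Finset.insert_erase hr1]
          rw [util0, util0]
          simp
    · -- (1,0)
      right
      constructor
      · intro _
        refine ⟨r0, by simp [hr0], ?_⟩
        rw [util1, util1, hr0]
        simp [h1]
        norm_num [b6]
      · intro hlt; norm_num [b6] at hlt
    · -- (1,1)
      right
      constructor
      · intro _
        refine ⟨r1, hr1, ?_⟩
        rw [util1, util1, Finset.card_erase_of_mem hr1, h1]
        norm_num
      · intro hlt; norm_num [b6] at hlt
end

section
/- For every α with 0 < α ≤ 1, there exists an instance with identical resources that admits no α-MMS-init allocation. Concretely, choose n with 1 < (α/3)·H_n where H_n is the n-th harmonic number, take m = 2n identical resources, and let agent i (for i = 1, …, n) have initial utility b_i = m^{i−1} and per-resource utility m^{i−1}; then no allocation X satisfies b_i + u_i(X_i) ≥ α·μ_i for all agents i. -/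
/-- The max-min-share `μ_i` of agent `i` in the instance with `n` agents and
`m = 2n` identical resources, where agent `i` (0-indexed) has initial utility
`b_i = m^i` and per-resource utility `m^i`: the largest `q` such that some
allocation `Y` (pairwise disjoint bundles) guarantees `q ≤ b_j + u_i(Y_j)`
for every agent `j`. -/
noncomputable def mms (n : ℕ) (i : Fin n) : ℝ :=
  sSup {q : ℝ | ∃ Y : Fin n → Finset (Fin (2 * n)),
    (∀ j k : Fin n, j ≠ k → Disjoint (Y j) (Y k)) ∧
    ∀ j : Fin n, q ≤ (2 * n : ℝ) ^ (j : ℕ) + (2 * n : ℝ) ^ (i : ℕ) * ((Y j).card : ℝ)}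

/-!
Agent `i` (0-indexed, `m = 2n`) can split the resources into `i + 1` blocks of `⌊m/(i+1)⌋`,
so its share is at least `m^i ⌊m/(i+1)⌋ ≥ m^i · n/(i+1)`. Since `b_i = m^i`, an `α`-MMS-init
allocation must give agent `i` at least `α n/(i+1) - 1` resources; summing over all agents,
`α n H_n - n ≤ 2n`, i.e. `α H_n ≤ 3`.
-/

open Finset

theorem card_filter_div_eq {N k j : ℕ} (hk : 0 < k) (h : (j + 1) * k ≤ N) :
    #{r : Fin N | (r : ℕ) / k = j} = k := by
  rw [add_one_mul] at h
  have hblock : ({r : Fin N | (r : ℕ) / k = j} : Finset (Fin N)).map Fin.valEmbedding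
      = Ico (j * k) (j * k + k) := by
    ext r
    simp only [mem_map, mem_filter, mem_univ, true_and, Fin.valEmbedding_apply, mem_Ico,
      Nat.div_eq_iff hk]
    constructor
    · rintro ⟨r, hr, rfl⟩
      omega
    · intro hr
      exact ⟨⟨r, by omega⟩, by dsimp only; omega, rfl⟩
  rw [← card_map, hblock, Nat.card_Ico, Nat.add_sub_cancel_left]

theorem sum_card_le_of_pairwise_disjoint {ι : Type*} [Fintype ι] {N : ℕ}
    {X : ι → Finset (Fin N)} (hX : ∀ j k, j ≠ k → Disjoint (X j) (X k)) :
    ∑ i, #(X i) ≤ N := by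
  classical
  rw [← card_biUnion fun j _ k _ hjk => hX j k hjk]
  simpa using card_le_univ (univ.biUnion X)

theorem le_two_mul_div_mul {a b : ℕ} (hb : 0 < b) (hba : b ≤ a) : a ≤ 2 * a / b * b := by
  have := Nat.div_add_mod' (2 * a) b
  have := Nat.mod_lt (2 * a) hb
  omega

theorem nat_mul_sum_inv_le_sum_div (n : ℕ) :
    n * ∑ i ∈ range n, (1 : ℝ) / (i + 1) ≤ ∑ i ∈ range n, ((2 * n / (i + 1) : ℕ) : ℝ) := by
  rw [mul_sum]
  refine sum_le_sum fun i hi => ?_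
  have hle : n ≤ 2 * n / (i + 1) * (i + 1) :=
    le_two_mul_div_mul i.succ_pos (mem_range.1 hi)
  rw [mul_one_div, div_le_iff₀ (by positivity)]
  exact_mod_cast hle

theorem le_mms {n : ℕ} {i : Fin n} {q : ℝ} (Y : Fin n → Finset (Fin (2 * n)))
    (hY : ∀ j k : Fin n, j ≠ k → Disjoint (Y j) (Y k))
    (hq : ∀ j : Fin n, q ≤ (2 * n : ℝ) ^ (j : ℕ) + (2 * n : ℝ) ^ (i : ℕ) * (#(Y j) : ℝ)) :
    q ≤ mms n i := by
  have hn : 0 < n := i.pos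
  refine le_csSup ⟨1 + (2 * n : ℝ) ^ (i : ℕ) * (2 * n), ?_⟩ ⟨Y, hY, hq⟩
  rintro q ⟨Y, -, hY⟩
  have hcard : (#(Y ⟨0, hn⟩) : ℝ) ≤ 2 * n := by
    exact_mod_cast card_le_univ (Y ⟨0, hn⟩) |>.trans_eq (Fintype.card_fin _)
  calc q ≤ 1 + (2 * n : ℝ) ^ (i : ℕ) * #(Y ⟨0, hn⟩) := by simpa using hY ⟨0, hn⟩
    _ ≤ 1 + (2 * n : ℝ) ^ (i : ℕ) * (2 * n) := by gcongr

/- Agents `j ≤ i` each get a block of `⌊2n/(i+1)⌋` consecutive resources; agents `j > i` need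
nothing, as already `b_j ≥ m^(i+1)`. -/
theorem pow_mul_div_le_mms {n : ℕ} (i : Fin n) :
    (2 * n : ℝ) ^ (i : ℕ) * ((2 * n / (i + 1) : ℕ) : ℝ) ≤ mms n i := by
  set k := 2 * n / (i + 1)
  have hk : 0 < k := Nat.div_pos (by omega) i.succ_pos
  refine le_mms (fun j => {r | (r : ℕ) / k = j}) (fun j l hjl => ?_) fun j => ?_
  · refine disjoint_left.2 fun r hj hl => hjl (Fin.ext ?_)
    simp only [mem_filter, mem_univ, true_and] at hj hl
    rw [← hj, ← hl]
  rcases le_or_gt (j : ℕ) i with hji | hij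
  · have hblock : (j + 1) * k ≤ 2 * n :=
      (Nat.mul_le_mul_right k (by omega)).trans (Nat.mul_div_le (2 * n) (i + 1))
    rw [card_filter_div_eq hk hblock]
    have := pow_nonneg (by positivity : (0 : ℝ) ≤ 2 * n) (j : ℕ)
    linarith
  · have hm : (1 : ℝ) ≤ 2 * n := by norm_cast; omega
    have hk_le : (k : ℝ) ≤ 2 * n := by exact_mod_cast Nat.div_le_self _ _
    calc (2 * n : ℝ) ^ (i : ℕ) * k ≤ (2 * n : ℝ) ^ (i + 1 : ℕ) := by
          rw [pow_succ]; gcongr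
      _ ≤ (2 * n : ℝ) ^ (j : ℕ) := pow_le_pow_right₀ hm hij
      _ ≤ _ := le_add_of_nonneg_right (by positivity)

theorem mul_div_le_one_add_card {n : ℕ} {α c : ℝ} (hα : 0 ≤ α) (i : Fin n)
    (hi : α * mms n i ≤ (2 * n : ℝ) ^ (i : ℕ) + (2 * n : ℝ) ^ (i : ℕ) * c) :
    α * ((2 * n / (i + 1) : ℕ) : ℝ) ≤ 1 + c := by
  have hpos : (0 : ℝ) < (2 * n : ℝ) ^ (i : ℕ) := by
    have : (0 : ℝ) < n := by exact_mod_cast i.pos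
    positivity
  refine le_of_mul_le_mul_left ?_ hpos
  calc (2 * n : ℝ) ^ (i : ℕ) * (α * ((2 * n / (i + 1) : ℕ) : ℝ))
      = α * ((2 * n : ℝ) ^ (i : ℕ) * ((2 * n / (i + 1) : ℕ) : ℝ)) := by ring
    _ ≤ α * mms n i := mul_le_mul_of_nonneg_left (pow_mul_div_le_mms i) hα
    _ ≤ _ := by linarith

theorem stmt_8_general (α : ℝ) (hα0 : 0 < α) (n : ℕ)
    (hn : 1 < α / 3 * ∑ i ∈ Finset.range n, (1 : ℝ) / (i + 1)) :
    ¬ ∃ X : Fin n → Finset (Fin (2 * n)),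
        (∀ j k : Fin n, j ≠ k → Disjoint (X j) (X k)) ∧
        ∀ i : Fin n,
          α * mms n i ≤ (2 * n : ℝ) ^ (i : ℕ) + (2 * n : ℝ) ^ (i : ℕ) * ((X i).card : ℝ) := by
  rintro ⟨X, hdisj, hX⟩
  set H := ∑ i ∈ range n, (1 : ℝ) / (i + 1)
  have hn0 : (0 : ℝ) < n := by
    rcases Nat.eq_zero_or_pos n with rfl | h
    · simp only [H, range_zero, sum_empty, mul_zero] at hn
      exact absurd hn zero_le_one.not_gt
    · exact_mod_cast h
  have htotal : (∑ i, #(X i) : ℝ) ≤ 2 * n := by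
    exact_mod_cast sum_card_le_of_pairwise_disjoint hdisj
  have hshares : α * (n * H) ≤ 3 * n := calc
    α * (n * H) ≤ α * ∑ i ∈ range n, ((2 * n / (i + 1) : ℕ) : ℝ) :=
      mul_le_mul_of_nonneg_left (nat_mul_sum_inv_le_sum_div n) hα0.le
    _ = ∑ i : Fin n, α * ((2 * n / (i + 1) : ℕ) : ℝ) := by
      rw [mul_sum, Fin.sum_univ_eq_sum_range (fun i => α * ((2 * n / (i + 1) : ℕ) : ℝ))]
    _ ≤ ∑ i : Fin n, (1 + (#(X i) : ℝ)) :=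
      sum_le_sum fun i _ => mul_div_le_one_add_card hα0.le i (hX i)
    _ ≤ 3 * n := by
      rw [sum_add_distrib, sum_const, card_univ, Fintype.card_fin, nsmul_one]
      linarith
  have hαH : α * H ≤ 3 := le_of_mul_le_mul_left (by linarith) hn0
  linarith

/-- For every `0 < α ≤ 1`, choosing `n` with `1 < (α/3)·H_n`, the instance with
`m = 2n` identical resources and `b_i = u_i({r}) = m^{i-1}` admits no
`α`-MMS-init allocation. -/
theorem stmt_8 (α : ℝ) (hα0 : 0 < α) (hα1 : α ≤ 1) (n : ℕ)
    (hn : 1 < α / 3 * ∑ i ∈ Finset.range n, (1 : ℝ) / (i + 1)) :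
    ¬ ∃ X : Fin n → Finset (Fin (2 * n)),
        (∀ j k : Fin n, j ≠ k → Disjoint (X j) (X k)) ∧
        ∀ i : Fin n,
          α * mms n i ≤ (2 * n : ℝ) ^ (i : ℕ) + (2 * n : ℝ) ^ (i : ℕ) * ((X i).card : ℝ) :=
  stmt_8_general α hα0 n hn
end

section
/- In the instance of the previous non-existence construction with identical resources where agent i has b_i = u_i({r}) = m^{i−1} for m = 2n resources, for every agent i it holds that μ_i ≥ ⌊m/i⌋ · m^{i−1}, where μ_i is the max-min-share of agent i. -/
/-- In this instance, the max-min-share of agent `i` (1-indexed agent `i+1`)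
satisfies `μ_i ≥ ⌊m / i⌋ · m^{i-1}`, i.e. with 0-indexing
`mms n i ≥ (2n / (i+1)) * (2n)^i` (natural-number floor division). -/
theorem stmt_9 (n : ℕ) (i : Fin n) :
    ((2 * n / ((i : ℕ) + 1) : ℕ) : ℝ) * (2 * n : ℝ) ^ (i : ℕ) ≤ mms n i := by
  have hn : 0 < n := i.pos
  set k : ℕ := 2 * n / ((i : ℕ) + 1) with hk
  have hik : ((i : ℕ) + 1) * k ≤ 2 * n := by
    rw [hk, mul_comm]; exact Nat.div_mul_le_self _ _
  -- the allocation: agent j ≤ i gets the block [j*k, j*k+k), others nothing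
  have hbound : ∀ j : Fin n, (j : ℕ) ≤ (i : ℕ) →
      ∀ x ∈ Finset.Ico ((j : ℕ) * k) ((j : ℕ) * k + k), x < 2 * n := by
    intro j hj x hx
    rw [Finset.mem_Ico] at hx
    calc x < (j : ℕ) * k + k := hx.2
      _ = ((j : ℕ) + 1) * k := by ring
      _ ≤ ((i : ℕ) + 1) * k := by
          exact Nat.mul_le_mul_right _ (Nat.succ_le_succ hj)
      _ ≤ 2 * n := hik
  classical
  set Y : Fin n → Finset (Fin (2 * n)) := fun j =>
    if h : (j : ℕ) ≤ (i : ℕ) then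
      (Finset.Ico ((j : ℕ) * k) ((j : ℕ) * k + k)).attachFin (hbound j h)
    else ∅ with hY
  apply le_csSup
  · -- bounded above
    refine ⟨1 + (2 * n : ℝ) ^ (i : ℕ) * (2 * n), ?_⟩
    rintro q ⟨Z, _, hq⟩
    have h0 := hq ⟨0, hn⟩
    simp only [pow_zero] at h0
    refine h0.trans ?_
    have hc : ((Z ⟨0, hn⟩).card : ℝ) ≤ (2 * n : ℝ) := by
      have := (Z ⟨0, hn⟩).card_le_univ
      simp only [Finset.card_univ, Fintype.card_fin] at this
      exact_mod_cast this
    have hpos : (0 : ℝ) ≤ (2 * n : ℝ) ^ (i : ℕ) := by positivity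
    have := mul_le_mul_of_nonneg_left hc hpos
    linarith
  · -- membership
    refine ⟨Y, ?_, ?_⟩
    · intro j l hjl
      rw [hY]
      dsimp only
      split_ifs with h1 h2 h2
      · rw [Finset.disjoint_left]
        intro a ha ha'
        rw [Finset.mem_attachFin, Finset.mem_Ico] at ha ha'
        have hjlv : (j : ℕ) ≠ (l : ℕ) := fun h => hjl (Fin.ext h)
        rcases lt_or_gt_of_ne hjlv with h | h
        · have : (j : ℕ) * k + k ≤ (l : ℕ) * k := by
            calc (j : ℕ) * k + k = ((j : ℕ) + 1) * k := by ring
              _ ≤ (l : ℕ) * k := Nat.mul_le_mul_right _ h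
          omega
        · have : (l : ℕ) * k + k ≤ (j : ℕ) * k := by
            calc (l : ℕ) * k + k = ((l : ℕ) + 1) * k := by ring
              _ ≤ (j : ℕ) * k := Nat.mul_le_mul_right _ h
          omega
      · exact Finset.disjoint_empty_right _
      · exact Finset.disjoint_empty_left _
      · exact Finset.disjoint_empty_left _
    · intro j
      rw [hY]
      dsimp only
      split_ifs with h
      · have hcard : ((Finset.Ico ((j : ℕ) * k) ((j : ℕ) * k + k)).attachFin
            (hbound j h)).card = k := by
          rw [Finset.card_attachFin, Nat.card_Ico]; simp
        rw [hcard]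
        have hb : (0 : ℝ) ≤ (2 * n : ℝ) ^ (j : ℕ) := by positivity
        linarith
      · simp only [Finset.card_empty, Nat.cast_zero, mul_zero, add_zero]
        have hm1 : (1 : ℝ) ≤ (2 * n : ℝ) := by
          have : (1 : ℕ) ≤ 2 * n := by omega
          exact_mod_cast this
        have hkm : (k : ℝ) ≤ (2 * n : ℝ) := by
          have : k ≤ 2 * n := Nat.div_le_self _ _
          exact_mod_cast this
        have hij : (i : ℕ) + 1 ≤ (j : ℕ) := Nat.succ_le_of_lt (lt_of_not_ge h)
        calc (k : ℝ) * (2 * n : ℝ) ^ (i : ℕ)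
            ≤ (2 * n : ℝ) * (2 * n : ℝ) ^ (i : ℕ) := by
              apply mul_le_mul_of_nonneg_right hkm; positivity
          _ = (2 * n : ℝ) ^ ((i : ℕ) + 1) := by rw [pow_succ]; ring
          _ ≤ (2 * n : ℝ) ^ (j : ℕ) := pow_le_pow_right₀ hm1 hij
end

section
/- There exists an instance with two agents and identical resources and submodular utilities in which no complete min-EF1-init allocation exists. Concretely: with 5 identical resources, agent i with b_i = 0 whose utility for a bundle of size k ≥ 1 is 10 + (k−1)·ε for small ε > 0, and agent j with b_j = 10 and additive utility 10 per resource, every complete allocation violates min-EF1-init. -/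
/-- Agent 0 is agent `i` (initial utility 0), agent 1 is agent `j` (initial
utility 10). -/
def b10 : Fin 2 → ℚ := ![0, 10]

/-- Utility functions over bundles of the 5 identical resources: agent `i`
(index 0) has the submodular utility `10 + (|X| - 1)·ε` for nonempty `X` and `0`
for `∅`; agent `j` (index 1) has the additive utility `10·|X|`. -/
def u10 (ε : ℚ) : Fin 2 → Finset (Fin 5) → ℚ := fun k X =>
  if k = 0 then (if X = ∅ then 0 else 10 + ((X.card : ℚ) - 1) * ε)
  else 10 * (X.card : ℚ)

/-- `min { u j' ({r}) : b j' < b k }` (marginal value of a singleton), `0` if no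
agent has smaller initial utility. -/
def minB10 (ε : ℚ) (k : Fin 2) (r : Fin 5) : ℚ :=
  if h : (Finset.univ.filter (fun j' => b10 j' < b10 k)).Nonempty then
    (Finset.univ.filter (fun j' => b10 j' < b10 k)).inf' h (fun j' => u10 ε j' {r})
  else 0

/-- min-EF1-init for this (non-additive) instance. -/
def minEF1init10 (ε : ℚ) (X : Fin 2 → Finset (Fin 5)) : Prop :=
  ∀ k l : Fin 2, X l = ∅ ∨
    ((b10 k ≤ b10 l → ∃ r ∈ X l,
        b10 l + u10 ε k ((X l).erase r) ≤ b10 k + u10 ε k (X k)) ∧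
     (b10 l < b10 k → ∃ r ∈ X l, ∃ Xs ⊆ X l,
        (∑ r' ∈ Xs, minB10 ε k r') < b10 k - b10 l ∧
        u10 ε k (X l \ insert r Xs) ≤ u10 ε k (X k)))

lemma minB10_one (ε : ℚ) (r : Fin 5) : minB10 ε 1 r = 10 := by
  have hfil : Finset.univ.filter (fun j' => b10 j' < b10 1) = {0} := by
    ext j'
    fin_cases j' <;> simp [b10]
  rw [minB10, hfil]
  rw [dif_pos (Finset.singleton_nonempty 0)]
  rw [Finset.inf'_singleton]
  simp [u10]

/-- With submodular utilities, a complete min-EF1-init allocation may fail to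
exist: for every small `ε > 0`, every complete allocation of the 5 identical
resources violates min-EF1-init. -/
theorem stmt_10 (ε : ℚ) (hε0 : 0 < ε) (hε5 : ε < 5) :
    ∀ X : Fin 2 → Finset (Fin 5),
      (∀ k l : Fin 2, k ≠ l → Disjoint (X k) (X l)) →
      (X 0 ∪ X 1 = Finset.univ) →
      ¬ minEF1init10 ε X := by
  intro X hdisj hcover h
  have hcard : (X 0).card + (X 1).card = 5 := by
    have := Finset.card_union_of_disjoint (hdisj 0 1 (by decide))
    rw [hcover] at this
    simpa using this.symm
  rcases le_or_gt (X 1).card 1 with hc | hc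
  · -- X 0 has at least 4 elements; agent 1 envies agent 0 too much
    have ha : 4 ≤ (X 0).card := by omega
    rcases h 1 0 with h0 | ⟨_, h2⟩
    · rw [h0] at ha; simp at ha
    · obtain ⟨r, hr, Xs, hXs, hsum, hle⟩ := h2 (by norm_num [b10])
      have hsum' : (10 : ℚ) * Xs.card < 10 := by
        have : ∑ r' ∈ Xs, minB10 ε 1 r' = ∑ r' ∈ Xs, (10 : ℚ) := by
          exact Finset.sum_congr rfl fun r' _ => minB10_one ε r'
        rw [this, Finset.sum_const, nsmul_eq_mul, mul_comm] at hsum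
        simpa [b10] using hsum
      have hXs0 : Xs = ∅ := by
        rw [← Finset.card_eq_zero]
        by_contra hne
        have h1' : 1 ≤ Xs.card := by omega
        have : (1 : ℚ) ≤ (Xs.card : ℚ) := by exact_mod_cast h1'
        linarith
      rw [hXs0] at hle
      simp only [u10] at hle
      norm_num at hle
      have hcard' : (X 0 \ {r}).card = (X 0).card - 1 := by
        rw [Finset.sdiff_singleton_eq_erase, Finset.card_erase_of_mem hr]
      omega
  · -- X 1 has at least 2 elements; agent 0 fails EF1 toward agent 1
    rcases h 0 1 with h0 | ⟨h1, _⟩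
    · rw [h0] at hc; simp at hc
    · obtain ⟨r, hr, hle⟩ := h1 (by norm_num [b10])
      have hec : ((X 1).erase r).card = (X 1).card - 1 :=
        Finset.card_erase_of_mem hr
      have hene : (X 1).erase r ≠ ∅ := by
        intro he
        rw [he] at hec
        simp at hec
        omega
      have hecQ : (1 : ℚ) ≤ (((X 1).erase r).card : ℚ) := by
        have : 1 ≤ ((X 1).erase r).card := by omega
        exact_mod_cast this
      simp only [u10, if_pos rfl, if_neg hene, b10] at hle
      norm_num at hle
      by_cases h00 : X 0 = ∅
      · rw [if_pos h00] at hle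
        nlinarith
      · rw [if_neg h00] at hle
        have haQ : ((X 0).card : ℚ) ≤ 3 := by
          have : (X 0).card ≤ 3 := by omega
          exact_mod_cast this
        nlinarith
end

section
/- Given a graph G = (V, E) and ℓ ∈ ℕ, G admits a proper ℓ-coloring if and only if the graph G' obtained from G by adding (ℓ−1)·|V| isolated vertices admits an equitable ℓ-coloring. -/
/-- `G` admits a proper `ℓ`-coloring iff the graph obtained from `G` by adding
`(ℓ-1)·|V|` isolated vertices admits an equitable `ℓ`-coloring. -/
theorem stmt_11 {V : Type*} [Fintype V] [DecidableEq V] (G : SimpleGraph V) (ℓ : ℕ) :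
    (∃ c : V → Fin ℓ, ∀ a b : V, G.Adj a b → c a ≠ c b) ↔
    (∃ c : V ⊕ Fin ((ℓ - 1) * Fintype.card V) → Fin ℓ,
      (∀ a b, (G.map (Function.Embedding.inl)).Adj a b → c a ≠ c b) ∧
      ∀ h h' : Fin ℓ,
        (Finset.univ.filter (fun v => c v = h)).card ≤
          (Finset.univ.filter (fun v => c v = h')).card + 1) := by
  classical
  constructor
  · rintro ⟨c, hc⟩
    set n := Fintype.card V with hn
    -- injection of V into Fin ℓ × V
    set g : V → Fin ℓ × V := fun v => (c v, v) with hg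
    have hginj : Function.Injective g := fun a b hab => congrArg Prod.snd hab
    have hcard : Fintype.card (Fin ((ℓ - 1) * n)) =
        Fintype.card {x : Fin ℓ × V // x ∉ Set.range g} := by
      rw [Fintype.card_subtype_compl, Fintype.card_fin]
      have : Fintype.card {x : Fin ℓ × V // x ∈ Set.range g} = n :=
        Fintype.card_congr (Equiv.ofInjective g hginj).symm
      rw [this, Fintype.card_prod, Fintype.card_fin, ← hn, Nat.sub_mul, one_mul]
    let e : (V ⊕ Fin ((ℓ - 1) * n)) ≃ Fin ℓ × V :=
      (Equiv.sumCongr (Equiv.ofInjective g hginj) (Fintype.equivOfCardEq hcard)).trans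
        (Equiv.sumCompl (· ∈ Set.range g))
    have he : ∀ v : V, e (Sum.inl v) = g v := fun v => by
      simp [e, Equiv.sumCongr_apply]
    refine ⟨fun x => (e x).1, ?_, ?_⟩
    · intro a b hab
      rw [SimpleGraph.map_adj] at hab
      obtain ⟨u, w, huw, hu, hw⟩ := hab
      subst hu; subst hw
      show (e (Sum.inl u)).1 ≠ (e (Sum.inl w)).1
      rw [he u, he w]
      exact hc u w huw
    · -- every fiber has card exactly n
      have key : ∀ h : Fin ℓ,
          (Finset.univ.filter (fun x : V ⊕ Fin ((ℓ - 1) * n) => (e x).1 = h)).card = n := by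
        intro h
        rw [← Fintype.card_subtype]
        have e1 : {x : V ⊕ Fin ((ℓ - 1) * n) // (e x).1 = h} ≃
            {y : Fin ℓ × V // y.1 = h} := e.subtypeEquiv fun x => Iff.rfl
        have e2 : {y : Fin ℓ × V // y.1 = h} ≃ V :=
          { toFun := fun y => y.1.2
            invFun := fun v => ⟨(h, v), rfl⟩
            left_inv := by rintro ⟨⟨h', v⟩, rfl⟩; rfl
            right_inv := fun v => rfl }
        rw [Fintype.card_congr (e1.trans e2)]
      intro h h'
      rw [key h, key h']
      omega
  · rintro ⟨c, hc, _⟩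
    refine ⟨fun v => c (Sum.inl v), fun a b hab => ?_⟩
    exact hc (Sum.inl a) (Sum.inl b) (by
      rw [SimpleGraph.map_adj]
      exact ⟨a, b, hab, rfl, rfl⟩)
end

section
/- For two agents with identical resources: suppose agents i, j have per-resource values v_i, v_j > 0 and initial utilities b_i < b_j with v_i < v_j. Then in any allocation where both bundles are nonempty, at least one agent envies the other under EF-init; consequently, a complete EF-init allocation exists in this two-agent instance only if the instance admits one in which X_j = ∅. -/
/-- Two agents `i` (bundle `Xi`, initial utility `bi`, per-resource value `vi`)
and `j` (bundle `Xj`, `bj`, `vj`) over identical resources; `i` envies `j`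
under EF-init iff `Xj ≠ ∅` and `bi + vi·|Xi| < bj + vi·|Xj|`. -/
def envies2 {R : Type*} (ba va bc : ℚ) (Xa Xc : Finset R) : Prop :=
  Xc ≠ ∅ ∧ ba + va * ((Xa).card : ℚ) < bc + va * ((Xc).card : ℚ)

/-
If `|Xi| ≤ |Xj|` (e.g. `Xi = ∅`) and `Xj ≠ ∅`, agent `i` envies because `bi < bj`. If `|Xj| < |Xi|` and `i` does not envy
`j`, then `bj - bi ≤ vi (|Xi| - |Xj|) < vj (|Xi| - |Xj|)`, so `j` envies `i`. Hence in an
envy-free allocation `Xj` must be empty.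
-/

section

variable {R : Type*} {ba va bc bi bj vi vj : ℚ} {Xa Xc Xi Xj : Finset R}

theorem envies2_of_card_le (hva : 0 ≤ va) (hb : ba < bc) (hXc : Xc.Nonempty)
    (hcard : Xa.card ≤ Xc.card) : envies2 ba va bc Xa Xc := by
  refine ⟨hXc.ne_empty, ?_⟩
  have : va * (Xa.card : ℚ) ≤ va * Xc.card := by gcongr
  linarith

theorem envies2_of_card_lt_of_not_envies2 (hv : vi < vj) (hXi : Xi.Nonempty)
    (hXj : Xj.Nonempty) (hcard : Xj.card < Xi.card) (hi : ¬ envies2 bi vi bj Xi Xj) :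
    envies2 bj vj bi Xj Xi := by
  refine ⟨hXi.ne_empty, ?_⟩
  have hi' : bj + vi * Xj.card ≤ bi + vi * Xi.card := not_lt.mp fun h ↦ hi ⟨hXj.ne_empty, h⟩
  have hcard' : (Xj.card : ℚ) < Xi.card := by exact_mod_cast hcard
  nlinarith

theorem envies2_or_envies2 (hvi : 0 ≤ vi) (hb : bi < bj) (hv : vi < vj) (hXi : Xi.Nonempty)
    (hXj : Xj.Nonempty) : envies2 bi vi bj Xi Xj ∨ envies2 bj vj bi Xj Xi := by
  rcases le_or_gt Xi.card Xj.card with hcard | hcard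
  · exact .inl (envies2_of_card_le hvi hb hXj hcard)
  · exact or_iff_not_imp_left.mpr (envies2_of_card_lt_of_not_envies2 hv hXi hXj hcard)

theorem eq_empty_of_not_envies2 (hvi : 0 ≤ vi) (hb : bi < bj) (hv : vi < vj)
    (hi : ¬ envies2 bi vi bj Xi Xj) (hj : ¬ envies2 bj vj bi Xj Xi) : Xj = ∅ := by
  by_contra hne
  have hXj : Xj.Nonempty := Finset.nonempty_iff_ne_empty.mpr hne
  rcases Xi.eq_empty_or_nonempty with rfl | hXi
  · exact hi (envies2_of_card_le hvi hb hXj (by simp))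
  · exact (envies2_or_envies2 hvi hb hv hXi hXj).elim hi hj

end

theorem stmt_17_general {R : Type*} [Fintype R] [DecidableEq R]
    (bi bj vi vj : ℚ) (hvi : 0 < vi)
    (hb : bi < bj) (hv : vi < vj) :
    (∀ Xi Xj : Finset R, Xi.Nonempty → Xj.Nonempty →
      envies2 bi vi bj Xi Xj ∨ envies2 bj vj bi Xj Xi) ∧
    ((∃ Xi Xj : Finset R, Disjoint Xi Xj ∧ Xi ∪ Xj = Finset.univ ∧
        ¬ envies2 bi vi bj Xi Xj ∧ ¬ envies2 bj vj bi Xj Xi) →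
      (∃ Xi Xj : Finset R, Disjoint Xi Xj ∧ Xi ∪ Xj = Finset.univ ∧
        ¬ envies2 bi vi bj Xi Xj ∧ ¬ envies2 bj vj bi Xj Xi ∧ Xj = ∅)) := by
  refine ⟨fun Xi Xj hXi hXj ↦ envies2_or_envies2 hvi.le hb hv hXi hXj, ?_⟩
  rintro ⟨Xi, Xj, hdisj, huniv, hi, hj⟩
  exact ⟨Xi, Xj, hdisj, huniv, hi, hj, eq_empty_of_not_envies2 hvi.le hb hv hi hj⟩

/-- For two agents with identical resources, `b i < b j` and `v i < v j`:
(a) in any allocation with both bundles nonempty, some agent envies the other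
under EF-init; (b) consequently, if a complete EF-init allocation exists, then
one with `X j = ∅` exists. -/
theorem stmt_17 {R : Type*} [Fintype R] [DecidableEq R]
    (bi bj vi vj : ℚ) (hvi : 0 < vi) (hvj : 0 < vj)
    (hb : bi < bj) (hv : vi < vj) :
    (∀ Xi Xj : Finset R, Xi.Nonempty → Xj.Nonempty →
      envies2 bi vi bj Xi Xj ∨ envies2 bj vj bi Xj Xi) ∧
    ((∃ Xi Xj : Finset R, Disjoint Xi Xj ∧ Xi ∪ Xj = Finset.univ ∧
        ¬ envies2 bi vi bj Xi Xj ∧ ¬ envies2 bj vj bi Xj Xi) →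
      (∃ Xi Xj : Finset R, Disjoint Xi Xj ∧ Xi ∪ Xj = Finset.univ ∧
        ¬ envies2 bi vi bj Xi Xj ∧ ¬ envies2 bj vj bi Xj Xi ∧ Xj = ∅)) :=
  stmt_17_general bi bj vi vj hvi hb hv
end
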